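/- If p is an odd prime, m and n are positive integers, and the Pell number P_n equals 4·p^m, then n = 4, p = 3, and m = 1. -/

import Mathlib

/-! `P_{n+4} ≡ P_n (mod 4)`, so `4 ∣ P_n` forces `n = 4j`, and the doubling formula
`P_{2k} = 2 P_k Q_k` applied twice turns `P_{4j} = 4 p^m` into `P_j Q_j Q_{2j} = p^m`.
Since `Q_j² - 2 P_j² = ±1`, the factors `P_j` and `Q_j` are coprime, so one of them is `1`;
hence `j = 1` and `p^m = Q_2 = 3`. -/

def pellP : ℕ → ℕ
  | 0 => 0
  | 1 => 1
  | n + 2 => 2 * pellP (n + 1) + pellP n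

def pellQ : ℕ → ℕ
  | 0 => 1
  | 1 => 1
  | n + 2 => 2 * pellQ (n + 1) + pellQ n

theorem pellP_succ : ∀ n, pellP (n + 1) = pellP n + pellQ n
  | 0 => rfl
  | 1 => rfl
  | n + 2 => by
    have h₀ := pellP_succ n
    have h₁ := pellP_succ (n + 1)
    simp only [pellP, pellQ] at *
    omega

theorem pellQ_succ : ∀ n, pellQ (n + 1) = 2 * pellP n + pellQ n
  | 0 => rfl
  | 1 => rfl
  | n + 2 => by
    have h₀ := pellQ_succ n
    have h₁ := pellQ_succ (n + 1)
    simp only [pellP, pellQ] at *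
    omega

theorem pellQ_pos (n : ℕ) : 0 < pellQ n := by
  induction n with
  | zero => exact Nat.one_pos
  | succ n ih => rw [pellQ_succ]; omega

theorem pellP_strictMono : StrictMono pellP :=
  strictMono_nat_of_lt_succ fun n => by
    rw [pellP_succ]
    exact Nat.lt_add_of_pos_right (pellQ_pos n)

theorem pellP_le_pellQ (n : ℕ) : pellP n ≤ pellQ n := by
  cases n with
  | zero => exact Nat.zero_le _
  | succ n => rw [pellP_succ, pellQ_succ]; omega

theorem pellP_add (m n : ℕ) :
    pellP (m + n + 1) = pellP m * pellP n + pellP (m + 1) * pellP (n + 1) := by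
  induction n generalizing m with
  | zero => simp [pellP]
  | succ n ih =>
    rw [show m + (n + 1) + 1 = m + 1 + n + 1 by ring, ih (m + 1), pellP, pellP]
    ring

theorem pellP_two_mul (n : ℕ) : pellP (2 * n) = 2 * pellP n * pellQ n := by
  cases n with
  | zero => rfl
  | succ n =>
    rw [show 2 * (n + 1) = n + 1 + n + 1 by ring, pellP_add, pellP_succ (n + 1), pellQ_succ,
      pellP_succ n]
    ring

theorem pellP_four_mul (n : ℕ) : pellP (4 * n) = 4 * (pellP n * pellQ n * pellQ (2 * n)) := by
  rw [show 4 * n = 2 * (2 * n) by ring, pellP_two_mul, pellP_two_mul]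
  ring

theorem pellP_add_four (n : ℕ) : pellP (n + 4) = 12 * pellP (n + 1) + 5 * pellP n := by
  simp only [pellP]
  ring

theorem four_dvd_pellP_iff : ∀ n, 4 ∣ pellP n ↔ 4 ∣ n
  | 0 | 1 | 2 | 3 => by decide
  | n + 4 => by
    have := four_dvd_pellP_iff n
    rw [pellP_add_four]
    omega

theorem pellQ_sq_sub_two_mul_pellP_sq (n : ℕ) :
    (pellQ n : ℤ) ^ 2 - 2 * (pellP n : ℤ) ^ 2 = (-1) ^ n := by
  induction n with
  | zero => simp [pellP, pellQ]
  | succ n ih =>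
    rw [pellQ_succ, pellP_succ, pow_succ (-1 : ℤ), ← ih]
    push_cast
    ring

theorem coprime_pellP_pellQ (n : ℕ) : Nat.Coprime (pellP n) (pellQ n) := by
  rw [← Nat.isCoprime_iff_coprime]
  have hsq : ((-1 : ℤ) ^ n) ^ 2 = 1 := by rw [← pow_mul, mul_comm, pow_mul, neg_one_sq, one_pow]
  exact ⟨-2 * (-1) ^ n * pellP n, (-1) ^ n * pellQ n,
    by linear_combination (-1) ^ n * pellQ_sq_sub_two_mul_pellP_sq n + hsq⟩

theorem Nat.Coprime.eq_one_or_eq_one_of_mul_dvd_prime_pow {a b p m : ℕ} (hab : a.Coprime b)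
    (hp : p.Prime) (h : a * b ∣ p ^ m) : a = 1 ∨ b = 1 := by
  have prime_dvd {c : ℕ} (hc : c ∣ p ^ m) (hc1 : c ≠ 1) : p ∣ c := by
    obtain ⟨i, -, rfl⟩ := (Nat.dvd_prime_pow hp).1 hc
    exact dvd_pow_self p (by rintro rfl; exact hc1 (pow_zero p))
  by_contra! hne
  exact hp.ne_one <| Nat.eq_one_of_dvd_coprimes hab (prime_dvd (dvd_of_mul_right_dvd h) hne.1)
    (prime_dvd (dvd_of_mul_left_dvd h) hne.2)

theorem pellP_eq_four_prime_pow_general (p m n : ℕ) (hp : p.Prime) (h : pellP n = 4 * p ^ m) :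
    n = 4 ∧ p = 3 ∧ m = 1 := by
  obtain ⟨j, rfl⟩ : 4 ∣ n := (four_dvd_pellP_iff n).1 ⟨p ^ m, h⟩
  have hprod : pellP j * pellQ j * pellQ (2 * j) = p ^ m := by
    rw [pellP_four_mul] at h
    omega
  have hPj : pellP j ≤ pellP 1 := by
    rcases (coprime_pellP_pellQ j).eq_one_or_eq_one_of_mul_dvd_prime_pow hp
      (Dvd.intro _ hprod) with h1 | h1
    · exact h1.le
    · exact (pellP_le_pellQ j).trans h1.le
  have hj : j ≤ 1 := pellP_strictMono.le_iff_le.1 hPj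
  interval_cases j
  · exact absurd hprod.symm (pow_ne_zero m hp.ne_zero)
  · obtain ⟨rfl, rfl⟩ := Nat.prime_three.pow_eq_iff.1 hprod.symm
    simp

theorem pellP_eq_four_prime_pow (p m n : ℕ) (hp : p.Prime) (hodd : Odd p)
    (hm : 0 < m) (hn : 0 < n) (h : pellP n = 4 * p ^ m) :
    n = 4 ∧ p = 3 ∧ m = 1 :=
  pellP_eq_four_prime_pow_general p m n hp h
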